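/- Define f_j(x_0,…,x_n) := Σ_{m=0}^{n} Σ_{t=0}^{m} (αλ)^{m-t} φ_j(x_t) k(x_m) where |φ_j(x)| ≤ Φ_max and |k(x)| ≤ k_max for all x, and 0 ≤ αλ < 1. If x and x' differ only in the i-th coordinate, then |f_j(x) - f_j(x')| ≤ 2 Φ_max k_max (1 + 2αλ/(1-αλ)). -/
import Mathlib

lemma geom_sum_le_one_div {q : ℝ} (hq0 : 0 ≤ q) (hq1 : q < 1) (N : ℕ) :
    ∑ s ∈ Finset.range N, q ^ s ≤ 1 / (1 - q) := by
  have h1q : 0 < 1 - q := by linarith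
  rw [geom_sum_eq hq1.ne N]
  have e : (q ^ N - 1) / (q - 1) = (1 - q ^ N) / (1 - q) := by
    rw [← neg_div_neg_eq]; ring_nf
  rw [e, div_le_div_iff₀ h1q h1q]
  have hpow : 0 ≤ q ^ N := pow_nonneg hq0 N
  nlinarith

/-- Bounded-differences property of
`f_j(x₀,…,xₙ) = Σ_{m=0}^n Σ_{t=0}^m (αλ)^{m-t} φ_j(x_t) k(x_m)`: if `x`, `x'` differ only
in the `i`-th coordinate then `|f_j(x) - f_j(x')| ≤ 2 Φmax kmax (1 + 2αλ/(1-αλ))`. -/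
theorem stmt_13 {S : Type*}
    (α lam : ℝ) (hα : 0 < α) (hα1 : α < 1) (hlam : 0 ≤ lam) (h1 : α * lam < 1)
    (φj k : S → ℝ) (Φmax kmax : ℝ)
    (hφ : ∀ x, |φj x| ≤ Φmax) (hk : ∀ x, |k x| ≤ kmax)
    (n i : ℕ) (hi : i ≤ n)
    (x x' : ℕ → S) (hxx : ∀ j, j ≠ i → x j = x' j) :
    |(∑ m ∈ Finset.range (n + 1), ∑ t ∈ Finset.range (m + 1),
        (α * lam) ^ (m - t) * φj (x t) * k (x m)) -
      (∑ m ∈ Finset.range (n + 1), ∑ t ∈ Finset.range (m + 1),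
        (α * lam) ^ (m - t) * φj (x' t) * k (x' m))| ≤
      2 * Φmax * kmax * (1 + 2 * (α * lam) / (1 - α * lam)) := by
  set q : ℝ := α * lam with hq
  have hq0 : 0 ≤ q := mul_nonneg hα.le hlam
  have hq1 : q < 1 := h1
  have h1q : 0 < 1 - q := by linarith
  have hΦ0 : 0 ≤ Φmax := (abs_nonneg _).trans (hφ (x 0))
  have hk0 : 0 ≤ kmax := (abs_nonneg _).trans (hk (x 0))
  set C : ℝ := 2 * Φmax * kmax with hC
  have hC0 : 0 ≤ C := by positivity
  -- pointwise bound on each term of the double sum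
  have key : ∀ m t : ℕ,
      |q ^ (m - t) * φj (x t) * k (x m) - q ^ (m - t) * φj (x' t) * k (x' m)|
        ≤ (if t = i ∨ m = i then C * q ^ (m - t) else 0) := by
    intro m t
    by_cases h : t = i ∨ m = i
    · simp only [h, if_true]
      have hqp : 0 ≤ q ^ (m - t) := pow_nonneg hq0 _
      have b1 : |q ^ (m - t) * φj (x t) * k (x m)| ≤ q ^ (m - t) * Φmax * kmax := by
        rw [abs_mul, abs_mul, abs_pow, abs_of_nonneg hq0]
        gcongr <;> first | exact hφ _ | exact hk _ | exact hΦ0 | exact hk0 | positivity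
      have b2 : |q ^ (m - t) * φj (x' t) * k (x' m)| ≤ q ^ (m - t) * Φmax * kmax := by
        rw [abs_mul, abs_mul, abs_pow, abs_of_nonneg hq0]
        gcongr <;> first | exact hφ _ | exact hk _ | exact hΦ0 | exact hk0 | positivity
      calc |q ^ (m - t) * φj (x t) * k (x m) - q ^ (m - t) * φj (x' t) * k (x' m)|
          ≤ |q ^ (m - t) * φj (x t) * k (x m)| + |q ^ (m - t) * φj (x' t) * k (x' m)| :=
            abs_sub _ _
        _ ≤ q ^ (m - t) * Φmax * kmax + q ^ (m - t) * Φmax * kmax := add_le_add b1 b2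
        _ = C * q ^ (m - t) := by ring
    · push_neg at h
      rw [hxx t h.1, hxx m h.2]
      simp [h.1, h.2]
  -- the difference is the double sum of differences
  have hdiff : (∑ m ∈ Finset.range (n + 1), ∑ t ∈ Finset.range (m + 1),
        q ^ (m - t) * φj (x t) * k (x m)) -
      (∑ m ∈ Finset.range (n + 1), ∑ t ∈ Finset.range (m + 1),
        q ^ (m - t) * φj (x' t) * k (x' m)) =
      ∑ m ∈ Finset.range (n + 1), ∑ t ∈ Finset.range (m + 1),
        (q ^ (m - t) * φj (x t) * k (x m) - q ^ (m - t) * φj (x' t) * k (x' m)) := by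
    rw [← Finset.sum_sub_distrib]
    congr 1
    ext m
    rw [← Finset.sum_sub_distrib]
  rw [hdiff]
  -- compute the inner bound sums
  have hinner : ∀ m : ℕ,
      (∑ t ∈ Finset.range (m + 1), if t = i ∨ m = i then C * q ^ (m - t) else 0) =
      (if m < i then 0 else if m = i then C * ∑ s ∈ Finset.range (i + 1), q ^ s
        else C * q ^ (m - i)) := by
    intro m
    rcases lt_trichotomy m i with hmi | hmi | hmi
    · rw [if_pos hmi]
      apply Finset.sum_eq_zero
      intro t ht
      rw [Finset.mem_range] at ht
      have : ¬(t = i ∨ m = i) := by omega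
      simp [this]
    · subst hmi
      rw [if_neg (lt_irrefl _), if_pos rfl]
      have : (∑ t ∈ Finset.range (m + 1), if t = m ∨ m = m then C * q ^ (m - t) else 0) =
          ∑ t ∈ Finset.range (m + 1), C * q ^ (m - t) := by
        apply Finset.sum_congr rfl
        intro t _
        simp
      rw [this, Finset.mul_sum,
        ← Finset.sum_range_reflect (fun s => C * q ^ s) (m + 1)]
      exact Finset.sum_congr rfl fun t _ => by rw [Nat.add_sub_cancel]
    · rw [if_neg (by omega), if_neg (by omega)]
      rw [Finset.sum_eq_single i]
      · simp
      · intro t ht hti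
        rw [Finset.mem_range] at ht
        have : ¬(t = i ∨ m = i) := by omega
        simp [this]
      · intro hni
        rw [Finset.mem_range] at hni
        omega
  -- main calc
  calc |∑ m ∈ Finset.range (n + 1), ∑ t ∈ Finset.range (m + 1),
        (q ^ (m - t) * φj (x t) * k (x m) - q ^ (m - t) * φj (x' t) * k (x' m))|
      ≤ ∑ m ∈ Finset.range (n + 1), |∑ t ∈ Finset.range (m + 1),
        (q ^ (m - t) * φj (x t) * k (x m) - q ^ (m - t) * φj (x' t) * k (x' m))| :=
        Finset.abs_sum_le_sum_abs _ _
    _ ≤ ∑ m ∈ Finset.range (n + 1), ∑ t ∈ Finset.range (m + 1),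
        |q ^ (m - t) * φj (x t) * k (x m) - q ^ (m - t) * φj (x' t) * k (x' m)| := by
        apply Finset.sum_le_sum
        intro m _
        exact Finset.abs_sum_le_sum_abs _ _
    _ ≤ ∑ m ∈ Finset.range (n + 1), ∑ t ∈ Finset.range (m + 1),
        (if t = i ∨ m = i then C * q ^ (m - t) else 0) := by
        apply Finset.sum_le_sum
        intro m _
        apply Finset.sum_le_sum
        intro t _
        exact key m t
    _ = ∑ m ∈ Finset.range (n + 1),
        (if m < i then 0 else if m = i then C * ∑ s ∈ Finset.range (i + 1), q ^ s
          else C * q ^ (m - i)) := by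
        apply Finset.sum_congr rfl
        intro m _
        exact hinner m
    _ = (C * ∑ s ∈ Finset.range (i + 1), q ^ s) +
        ∑ m ∈ Finset.Ico (i + 1) (n + 1), C * q ^ (m - i) := by
        rw [Finset.range_eq_Ico,
          ← Finset.sum_Ico_consecutive _ (Nat.zero_le i) (by omega : i ≤ n + 1),
          Finset.sum_eq_sum_Ico_succ_bot (by omega : i < n + 1)]
        simp only [← Finset.range_eq_Ico]
        have ha : (∑ m ∈ Finset.range i, (if m < i then (0:ℝ)
            else if m = i then C * ∑ s ∈ Finset.range (i + 1), q ^ s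
            else C * q ^ (m - i))) = 0 := by
          apply Finset.sum_eq_zero
          intro m hm
          rw [Finset.mem_range] at hm
          rw [if_pos hm]
        have hb : (∑ m ∈ Finset.Ico (i + 1) (n + 1), (if m < i then (0:ℝ)
            else if m = i then C * ∑ s ∈ Finset.range (i + 1), q ^ s
            else C * q ^ (m - i))) = ∑ m ∈ Finset.Ico (i + 1) (n + 1), C * q ^ (m - i) := by
          apply Finset.sum_congr rfl
          intro m hm
          rw [Finset.mem_Ico] at hm
          rw [if_neg (by omega), if_neg (by omega)]
        rw [ha, hb]
        simp
    _ = C * (∑ s ∈ Finset.range (i + 1), q ^ s) +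
        C * q * ∑ s ∈ Finset.range (n - i), q ^ s := by
        congr 1
        rw [Finset.sum_Ico_eq_sum_range]
        have hni : n + 1 - (i + 1) = n - i := by omega
        rw [hni, Finset.mul_sum]
        apply Finset.sum_congr rfl
        intro s _
        have h2 : i + 1 + s - i = s + 1 := by omega
        rw [h2, pow_succ]
        ring
    _ ≤ C * (1 / (1 - q)) + C * q * (1 / (1 - q)) := by
        gcongr <;> first | exact geom_sum_le_one_div hq0 hq1 _ | positivity
    _ = C * (1 + 2 * q / (1 - q)) := by
        field_simp
        ring
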